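/- For all x, y ∈ 𝔹², |x − y| ≤ 2·tanh(h(x,y)/4), where h is the Hilbert metric of the unit disk; equality holds when x = −y. -/

import Mathlib

open Complex ComplexConjugate

/-- The line through two points `a`, `b` in the complex plane. -/
noncomputable def lineThrough (a b : ℂ) : Set ℂ :=
  {z : ℂ | ∃ t : ℝ, z = a + (t : ℂ) * (b - a)}

/-- The Hilbert metric of the unit disk: for `a ≠ b`,
`h(a,b) = log (|u-b||a-v| / (|u-a||b-v|))` where `u, v` are the intersection
points of the line through `a, b` with the unit circle, ordered so that
`|u-a| < |u-b|` (equivalently `|v-b| < |v-a|`). For `a = b` the defining set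
is empty and `sSup ∅ = 0`. -/
noncomputable def hilbertDist (a b : ℂ) : ℝ :=
  sSup { d : ℝ | ∃ u v : ℂ, ‖u‖ = 1 ∧ ‖v‖ = 1 ∧
    u ∈ lineThrough a b ∧ v ∈ lineThrough a b ∧
    dist u a < dist u b ∧ dist v b < dist v a ∧
    d = Real.log ((dist u b * dist a v) / (dist u a * dist b v)) }

/-- The hyperbolic (Poincaré) metric of the unit disk, defined by
`sinh (ρ(a,b)/2) = |a-b| / √((1-|a|²)(1-|b|²))`. -/
noncomputable def rhoDist (a b : ℂ) : ℝ :=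
  2 * Real.arsinh (‖a - b‖ /
    Real.sqrt ((1 - ‖a‖ ^ 2) * (1 - ‖b‖ ^ 2)))

/-- The visual angle metric of the unit disk:
`v(a,b) = sup {∠(a,z,b) : z ∈ ∂𝔹²}`. -/
noncomputable def visualAngle (a b : ℂ) : ℝ :=
  sSup { α : ℝ | ∃ z : ℂ, ‖z‖ = 1 ∧ α = EuclideanGeometry.angle a z b }

/-- Euclidean distance from the origin to the line through `a` and `b`. -/
noncomputable def distToLine (a b : ℂ) : ℝ := Metric.infDist 0 (lineThrough a b)

/-- The Hilbert disk `B_h(z₀, t)`. -/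
noncomputable def hilbertBall (z₀ : ℂ) (t : ℝ) : Set ℂ :=
  {z : ℂ | ‖z‖ < 1 ∧ hilbertDist z₀ z < t}

/-- The hyperbolic disk `B_ρ(z₀, t)`. -/
noncomputable def rhoBall (z₀ : ℂ) (t : ℝ) : Set ℂ :=
  {z : ℂ | ‖z‖ < 1 ∧ rhoDist z₀ z < t}

/-!
Order the chord through `x ≠ y` as `u, x, y, v` and put `p = |u - x|`, `s = |x - y|`,
`q = |y - v|`. Then `h(x, y) = log ((1 + s/p) (1 + s/q))`, and since a chord is no longer than a
diameter, `p + s + q ≤ 2`. By AM-GM the cross-ratio is at least `(1 + 2s/(p + q))^2`, hence at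
least `((2 + s)/(2 - s))^2 = exp (4 artanh (s/2))`, with equality for the diameter through `x = -y`.
-/

namespace Real

theorem log_sq_one_add_div_one_sub {a : ℝ} (ha : a ∈ Set.Ioo (-1) 1) :
    log (((1 + a) / (1 - a)) ^ 2) = 4 * artanh a := by
  rw [log_pow, artanh_eq_half_log (Set.Ioo_subset_Icc_self ha)]
  ring

theorem le_tanh_of_artanh_le {a z : ℝ} (ha : a ∈ Set.Ioo (-1) 1) (h : artanh a ≤ z) :
    a ≤ tanh z := by
  rwa [← artanh_le_artanh_iff ha ⟨neg_one_lt_tanh z, tanh_lt_one z⟩, artanh_tanh]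

theorem le_two_mul_tanh_log_div_four {s R : ℝ} (hs : 0 ≤ s) (hs₂ : s < 2)
    (h : ((2 + s) / (2 - s)) ^ 2 ≤ R) : s ≤ 2 * tanh (log R / 4) := by
  have hs' : s / 2 ∈ Set.Ioo (-1) 1 := ⟨by linarith, by linarith⟩
  have hquot : (2 + s) / (2 - s) = (1 + s / 2) / (1 - s / 2) := by
    field_simp [show 2 - s ≠ 0 by linarith]
  have hlog : 4 * artanh (s / 2) ≤ log R := by
    rw [← log_sq_one_add_div_one_sub hs', ← hquot]
    exact log_le_log (pow_pos (div_pos (by linarith) (by linarith)) 2) h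
  linarith [le_tanh_of_artanh_le hs' (show artanh (s / 2) ≤ log R / 4 by linarith)]

theorem tanh_log_sq_div_four {a : ℝ} (ha : a ∈ Set.Ioo (-1) 1) :
    tanh (log (((1 + a) / (1 - a)) ^ 2) / 4) = a := by
  rw [log_sq_one_add_div_one_sub ha, mul_div_cancel_left₀ _ four_ne_zero, tanh_artanh ha]

end Real

theorem exists_roots_of_neg_at_zero_and_one {A B C : ℝ} (hA : 0 < A) (h₀ : C < 0)
    (h₁ : A + B + C < 0) :
    ∃ t₁ t₂ : ℝ, t₁ < 0 ∧ 1 < t₂ ∧ ∀ t, A * t ^ 2 + B * t + C = A * (t - t₁) * (t - t₂) := by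
  have hD : 0 ≤ B ^ 2 - 4 * A * C := by nlinarith
  set r := √(B ^ 2 - 4 * A * C)
  have hr : r ^ 2 = B ^ 2 - 4 * A * C := Real.sq_sqrt hD
  have hfactor : ∀ t, A * t ^ 2 + B * t + C
      = A * (t - (-B - r) / (2 * A)) * (t - (-B + r) / (2 * A)) := by
    intro t
    field_simp
    linear_combination hr
  set t₁ := (-B - r) / (2 * A)
  set t₂ := (-B + r) / (2 * A)
  have hle : t₁ ≤ t₂ :=
    div_le_div_of_nonneg_right (by linarith [Real.sqrt_nonneg (B ^ 2 - 4 * A * C)]) (by positivity)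
  refine ⟨t₁, t₂, ?_, ?_, hfactor⟩
  · by_contra! h
    nlinarith [hfactor 0, mul_nonneg (mul_nonneg hA.le h) (h.trans hle)]
  · by_contra! h
    nlinarith [hfactor 1,
      mul_nonneg (mul_nonneg hA.le (sub_nonneg.2 h)) (sub_nonneg.2 (hle.trans h))]

section Chord

variable {E : Type*} [NormedAddCommGroup E] [InnerProductSpace ℝ E]

theorem dist_add_smul_add_smul (x v : E) (t t' : ℝ) :
    dist (x + t • v) (x + t' • v) = |t - t'| * ‖v‖ := by
  rw [dist_add_left, dist_eq_norm, ← sub_smul, norm_smul, Real.norm_eq_abs]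

theorem exists_norm_add_smul_sub_eq_one_iff {x y : E} (hx : ‖x‖ < 1) (hy : ‖y‖ < 1)
    (hxy : x ≠ y) : ∃ t₁ t₂ : ℝ, t₁ < 0 ∧ 1 < t₂ ∧
      ∀ t : ℝ, ‖x + t • (y - x)‖ = 1 ↔ t = t₁ ∨ t = t₂ := by
  have hquad : ∀ t : ℝ, ‖x + t • (y - x)‖ ^ 2 - 1
      = ‖y - x‖ ^ 2 * t ^ 2 + 2 * inner ℝ x (y - x) * t + (‖x‖ ^ 2 - 1) := by
    intro t
    rw [norm_add_sq_real, inner_smul_right, norm_smul, Real.norm_eq_abs, mul_pow, sq_abs]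
    ring
  have hA : 0 < ‖y - x‖ ^ 2 := pow_pos (norm_pos_iff.2 (sub_ne_zero.2 hxy.symm)) 2
  have h₀ : ‖x‖ ^ 2 - 1 < 0 := by nlinarith [norm_nonneg x]
  have h₁ : ‖y - x‖ ^ 2 + 2 * inner ℝ x (y - x) + (‖x‖ ^ 2 - 1) < 0 := by
    have := hquad 1
    rw [one_smul, add_sub_cancel] at this
    nlinarith [norm_nonneg y]
  obtain ⟨t₁, t₂, ht₁, ht₂, hfactor⟩ := exists_roots_of_neg_at_zero_and_one hA h₀ h₁
  refine ⟨t₁, t₂, ht₁, ht₂, fun t ↦ ?_⟩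
  rw [← pow_eq_one_iff_of_nonneg (norm_nonneg _) two_ne_zero, ← sub_eq_zero, hquad, hfactor,
    mul_eq_zero, mul_eq_zero, sub_eq_zero, sub_eq_zero]
  simp [hA.ne']

end Chord

theorem mem_lineThrough_iff {a b z : ℂ} :
    z ∈ lineThrough a b ↔ ∃ t : ℝ, z = a + t • (b - a) := by
  simp only [lineThrough, Set.mem_ofPred_eq, Complex.real_smul]

theorem hilbertDist_self (a : ℂ) : hilbertDist a a = 0 := by
  rw [hilbertDist]
  convert Real.sSup_empty using 2
  refine Set.eq_empty_of_forall_notMem ?_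
  rintro d ⟨u, v, -, -, -, -, hu, -⟩
  exact hu.false

/-- The Hilbert distance is the logarithm of the cross-ratio `[t₁, 0, 1, t₂]` of the parameters
of `u, x, y, v` along the line `t ↦ x + t • (y - x)`. -/
theorem hilbertDist_eq_log {x y : ℂ} {t₁ t₂ : ℝ} (hxy : x ≠ y) (ht₁ : t₁ < 0) (ht₂ : 1 < t₂)
    (hcircle : ∀ t : ℝ, ‖x + t • (y - x)‖ = 1 ↔ t = t₁ ∨ t = t₂) :
    hilbertDist x y = Real.log ((1 - t₁) * t₂ / (-t₁ * (t₂ - 1))) := by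
  have hs : 0 < ‖y - x‖ := norm_pos_iff.2 (sub_ne_zero.2 hxy.symm)
  have hdist_x : ∀ t : ℝ, dist (x + t • (y - x)) x = |t| * ‖y - x‖ := fun t ↦ by simp
  have hdist_y : ∀ t : ℝ, dist (x + t • (y - x)) y = |t - 1| * ‖y - x‖ := fun t ↦ by
    simpa using dist_add_smul_add_smul x (y - x) t 1
  have hcross : Real.log (dist (x + t₁ • (y - x)) y * dist x (x + t₂ • (y - x)) /
      (dist (x + t₁ • (y - x)) x * dist y (x + t₂ • (y - x))))
      = Real.log ((1 - t₁) * t₂ / (-t₁ * (t₂ - 1))) := by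
    rw [dist_comm x, dist_comm y, hdist_x, hdist_y, hdist_x, hdist_y, abs_of_neg ht₁,
      abs_of_neg (by linarith : t₁ - 1 < 0), abs_of_pos (by linarith : 0 < t₂),
      abs_of_pos (by linarith : 0 < t₂ - 1)]
    congr 1
    field_simp
    ring
  rw [hilbertDist, ← csSup_singleton (Real.log ((1 - t₁) * t₂ / (-t₁ * (t₂ - 1))))]
  congr 1
  ext d
  simp only [mem_lineThrough_iff, Set.mem_singleton_iff]
  constructor
  · rintro ⟨u, v, hu, hv, ⟨t, rfl⟩, ⟨t', rfl⟩, hux, hvy, rfl⟩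
    rw [hdist_x, hdist_y, mul_lt_mul_iff_left₀ hs] at hux
    rw [hdist_x, hdist_y, mul_lt_mul_iff_left₀ hs] at hvy
    obtain rfl : t = t₁ := ((hcircle t).1 hu).resolve_right <| by
      rintro rfl; rw [abs_of_pos (by linarith), abs_of_pos (by linarith)] at hux; linarith
    obtain rfl : t' = t₂ := ((hcircle t').1 hv).resolve_left <| by
      rintro rfl; rw [abs_of_neg (by linarith), abs_of_neg (by linarith)] at hvy; linarith
    exact hcross
  · rintro rfl
    refine ⟨_, _, (hcircle t₁).2 (.inl rfl), (hcircle t₂).2 (.inr rfl), ⟨t₁, rfl⟩, ⟨t₂, rfl⟩,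
      ?_, ?_, hcross.symm⟩
    · rw [hdist_x, hdist_y, abs_of_neg ht₁, abs_of_neg (by linarith : t₁ - 1 < 0)]
      gcongr; linarith
    · rw [hdist_x, hdist_y, abs_of_pos (by linarith : 0 < t₂),
        abs_of_pos (by linarith : 0 < t₂ - 1)]
      gcongr; linarith

theorem hilbertDist_neg_left {y : ℂ} (hy₀ : y ≠ 0) (hy : ‖y‖ < 1) :
    hilbertDist (-y) y = Real.log (((1 + ‖y‖) / (1 - ‖y‖)) ^ 2) := by
  obtain ⟨t₁, t₂, ht₁, ht₂, hcircle⟩ :=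
    exists_norm_add_smul_sub_eq_one_iff (by rwa [norm_neg]) hy (neg_ne_self.2 hy₀)
  have hnorm : ∀ t : ℝ, ‖-y + t • (y - -y)‖ = |2 * t - 1| * ‖y‖ := fun t ↦ by
    rw [show -y + t • (y - -y) = (2 * t - 1) • y by module, norm_smul, Real.norm_eq_abs]
  have ha : 0 < ‖y‖ := norm_pos_iff.2 hy₀
  have ha' : 1 < ‖y‖⁻¹ := one_lt_inv_iff₀.2 ⟨ha, hy⟩
  have h₁ : (1 - ‖y‖⁻¹) / 2 = t₁ := by
    refine ((hcircle _).1 ?_).resolve_right (by linarith)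
    rw [hnorm, show 2 * ((1 - ‖y‖⁻¹) / 2) - 1 = -‖y‖⁻¹ by ring, abs_neg, abs_inv, abs_norm,
      inv_mul_cancel₀ ha.ne']
  have h₂ : (1 + ‖y‖⁻¹) / 2 = t₂ := by
    refine ((hcircle _).1 ?_).resolve_left (by linarith)
    rw [hnorm, show 2 * ((1 + ‖y‖⁻¹) / 2) - 1 = ‖y‖⁻¹ by ring, abs_inv, abs_norm,
      inv_mul_cancel₀ ha.ne']
  have hden : -t₁ * (t₂ - 1) ≠ 0 := (mul_pos (neg_pos.2 ht₁) (sub_pos.2 ht₂)).ne'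
  rw [hilbertDist_eq_log (neg_ne_self.2 hy₀) ht₁ ht₂ hcircle, div_pow]
  congr 1
  rw [div_eq_div_iff hden (pow_ne_zero 2 (by linarith)), ← h₁, ← h₂]
  field_simp
  ring

theorem sq_two_add_div_two_sub_le_of_chord {t₁ t₂ s : ℝ} (ht₁ : t₁ < 0) (ht₂ : 1 < t₂)
    (hs : 0 < s) (hchord : (t₂ - t₁) * s ≤ 2) :
    ((2 + s) / (2 - s)) ^ 2 ≤ (1 - t₁) * t₂ / (-t₁ * (t₂ - 1)) := by
  have hs₂ : s < 2 := by nlinarith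
  rw [div_pow, div_le_div_iff₀ (by nlinarith) (by nlinarith)]
  -- chord-length slack times a positive factor, plus the AM-GM defect `2 (p - q)^2 / s`
  -- for `p = -t₁ s`, `q = (t₂ - 1) s`
  have key : (1 - t₁) * t₂ * (2 - s) ^ 2 - (2 + s) ^ 2 * (-t₁ * (t₂ - 1))
      = (2 - (t₂ - t₁) * s) * (2 * (t₂ - t₁) - s) + 2 * s * (t₂ - 1 + t₁) ^ 2 := by
    ring
  nlinarith [mul_nonneg (sub_nonneg.2 hchord) (by linarith : (0 : ℝ) ≤ 2 * (t₂ - t₁) - s),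
    mul_nonneg hs.le (sq_nonneg (t₂ - 1 + t₁))]

/-- For `x, y ∈ 𝔹²`, `|x - y| ≤ 2 tanh (h(x,y)/4)`, with equality when `x = -y`. -/
theorem abs_sub_le_two_tanh (x y : ℂ)
    (hx : ‖x‖ < 1) (hy : ‖y‖ < 1) :
    ‖x - y‖ ≤ 2 * Real.tanh (hilbertDist x y / 4) ∧
    (x = -y → ‖x - y‖ = 2 * Real.tanh (hilbertDist x y / 4)) := by
  rcases eq_or_ne x y with rfl | hxy
  · simp [hilbertDist_self]
  refine ⟨?_, ?_⟩
  · obtain ⟨t₁, t₂, ht₁, ht₂, hcircle⟩ := exists_norm_add_smul_sub_eq_one_iff hx hy hxy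
    have hs : 0 < ‖y - x‖ := norm_pos_iff.2 (sub_ne_zero.2 hxy.symm)
    have hchord : (t₂ - t₁) * ‖y - x‖ ≤ 2 := by
      have hdist := dist_add_smul_add_smul x (y - x) t₂ t₁
      rw [abs_of_pos (by linarith)] at hdist
      have := dist_le_norm_add_norm (x + t₂ • (y - x)) (x + t₁ • (y - x))
      rw [(hcircle t₁).2 (.inl rfl), (hcircle t₂).2 (.inr rfl)] at this
      linarith
    rw [hilbertDist_eq_log hxy ht₁ ht₂ hcircle, norm_sub_rev]
    exact Real.le_two_mul_tanh_log_div_four hs.le (by nlinarith)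
      (sq_two_add_div_two_sub_le_of_chord ht₁ ht₂ hs hchord)
  · rintro rfl
    have hy₀ : y ≠ 0 := fun h ↦ hxy (by simp [h])
    rw [hilbertDist_neg_left hy₀ hy,
      Real.tanh_log_sq_div_four ⟨by linarith [norm_nonneg y], hy⟩,
      show -y - y = (-2 : ℂ) * y by ring, norm_mul]
    norm_num
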